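/- For f(s,z) = z + z²/s² + z³/s³, the series ∑ⱼ₌₁^∞ (z²/(s−j)² + z³/(s−j)³) converges compactly normally for s ∈ ℂ \ ℕ and z ∈ ℂ; consequently the infinite inner composition Q(s,z) = Ω_{j=1}^∞ f(s−j, z) • z defines a function holomorphic in s on ℂ \ ℕ satisfying Q(s+1) = Q(s) + Q(s)²/s² + Q(s)³/s³. -/
import Mathlib

open Complex Metric Filter Topology

/-- `Qn n s z = f (s-1, f (s-2, ..., f (s-n, z)))` where
`f a w = w + w^2 / a^2 + w^3 / a^3`. -/
noncomputable def Qn : ℕ → ℂ → ℂ → ℂ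
  | 0, _, z => z
  | (n + 1), s, z =>
      Qn n (s - 1) z + (Qn n (s - 1) z) ^ 2 / (s - 1) ^ 2 +
        (Qn n (s - 1) z) ^ 3 / (s - 1) ^ 3

lemma Qn_succ_inner (k : ℕ) (s z : ℂ) :
    Qn (k + 1) s z = Qn k s (z + z ^ 2 / (s - (k + 1 : ℕ)) ^ 2 + z ^ 3 / (s - (k + 1 : ℕ)) ^ 3) := by
  induction k generalizing s z with
  | zero => simp [Qn]
  | succ k ih =>
      show Qn (k + 1) (s - 1) z + _ + _ = _
      rw [ih (s - 1) z]
      have harg : (s - 1 - ((k + 1 : ℕ) : ℂ)) = s - ((k + 1 + 1 : ℕ) : ℂ) := by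
        push_cast; ring
      rw [harg]
      rfl

lemma Qn_split (N j : ℕ) (s z : ℂ) : Qn (N + j) s z = Qn N s (Qn j (s - (N : ℕ)) z) := by
  induction j generalizing z with
  | zero => simp [Qn]
  | succ j ih =>
      have h1 : N + (j + 1) = (N + j) + 1 := by ring
      rw [h1, Qn_succ_inner (N + j) s z, ih, Qn_succ_inner j (s - (N:ℕ)) z]
      congr 1
      have h2 : s - ((N + j + 1 : ℕ) : ℂ) = s - (N : ℕ) - ((j + 1 : ℕ) : ℂ) := by
        push_cast; ring
      rw [h2]

/-- increment bound for one step -/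
lemma step_inc {a w : ℂ} {m R : ℝ} (hm : 0 < m) (ha : m ≤ ‖a‖) (hw : ‖w‖ ≤ R) :
    ‖w ^ 2 / a ^ 2 + w ^ 3 / a ^ 3‖ ≤ R ^ 2 / m ^ 2 + R ^ 3 / m ^ 3 := by
  have hR : 0 ≤ R := le_trans (norm_nonneg _) hw
  have h2 : ‖w ^ 2 / a ^ 2‖ ≤ R ^ 2 / m ^ 2 := by
    rw [norm_div, norm_pow, norm_pow]
    exact div_le_div₀ (by positivity) (by gcongr) (by positivity) (by gcongr)
  have h3 : ‖w ^ 3 / a ^ 3‖ ≤ R ^ 3 / m ^ 3 := by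
    rw [norm_div, norm_pow, norm_pow]
    exact div_le_div₀ (by positivity) (by gcongr) (by positivity) (by gcongr)
  calc ‖w ^ 2 / a ^ 2 + w ^ 3 / a ^ 3‖ ≤ ‖w ^ 2 / a ^ 2‖ + ‖w ^ 3 / a ^ 3‖ := norm_add_le _ _
    _ ≤ _ := add_le_add h2 h3

/-- Lipschitz bound for one step -/
lemma step_lip {a w w' : ℂ} {m R : ℝ} (hm : 0 < m) (ha : m ≤ ‖a‖)
    (hw : ‖w‖ ≤ R) (hw' : ‖w'‖ ≤ R) :
    ‖(w + w ^ 2 / a ^ 2 + w ^ 3 / a ^ 3) - (w' + w' ^ 2 / a ^ 2 + w' ^ 3 / a ^ 3)‖ ≤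
      (1 + 2 * R / m ^ 2 + 3 * R ^ 2 / m ^ 3) * ‖w - w'‖ := by
  have hR : 0 ≤ R := le_trans (norm_nonneg _) hw
  have ha0 : a ≠ 0 := by
    intro h; rw [h, norm_zero] at ha; linarith
  have key : (w + w ^ 2 / a ^ 2 + w ^ 3 / a ^ 3) - (w' + w' ^ 2 / a ^ 2 + w' ^ 3 / a ^ 3)
      = (w - w') * (1 + (w + w') / a ^ 2 + (w ^ 2 + w * w' + w' ^ 2) / a ^ 3) := by
    field_simp
    ring
  rw [key, norm_mul, mul_comm]
  gcongr
  have hma : (0:ℝ) < ‖a‖ := lt_of_lt_of_le hm ha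
  calc ‖1 + (w + w') / a ^ 2 + (w ^ 2 + w * w' + w' ^ 2) / a ^ 3‖
      ≤ ‖(1:ℂ)‖ + ‖(w + w') / a ^ 2‖ + ‖(w ^ 2 + w * w' + w' ^ 2) / a ^ 3‖ :=
        norm_add₃_le
    _ ≤ 1 + 2 * R / m ^ 2 + 3 * R ^ 2 / m ^ 3 := by
        rw [norm_one]
        gcongr 1 + ?_ + ?_
        · rw [norm_div, norm_pow]
          refine div_le_div₀ (by positivity) ?_ (by positivity) (by gcongr)
          calc ‖w + w'‖ ≤ ‖w‖ + ‖w'‖ := norm_add_le _ _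
            _ ≤ 2 * R := by linarith
        · rw [norm_div, norm_pow]
          refine div_le_div₀ (by positivity) ?_ (by positivity) (by gcongr)
          calc ‖w ^ 2 + w * w' + w' ^ 2‖ ≤ ‖w ^ 2‖ + ‖w * w'‖ + ‖w' ^ 2‖ := norm_add₃_le
            _ ≤ R ^ 2 + R * R + R ^ 2 := by
                rw [norm_pow, norm_mul, norm_pow]
                gcongr
            _ ≤ 3 * R ^ 2 := by nlinarith


/-- the set of positive-integer points in ℂ is closed -/
lemma isClosed_posNat : IsClosed ((fun n : ℕ => (n : ℂ)) '' {n : ℕ | 1 ≤ n}) := by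
  have hemb : IsClosedEmbedding (fun n : ℕ => (n : ℂ)) := by
    have h1 : IsClosedEmbedding ((↑) : ℝ → ℂ) := Complex.isometry_ofReal.isClosedEmbedding
    have h2 : IsClosedEmbedding ((↑) : ℕ → ℝ) := Nat.isClosedEmbedding_coe_real
    have heq : (fun n : ℕ => (n : ℂ)) = ((↑) : ℝ → ℂ) ∘ ((↑) : ℕ → ℝ) := by
      funext n; simp
    rw [heq]
    exact h1.comp h2
  exact hemb.isClosedMap _ (isClosed_discrete _)

lemma isOpen_U : IsOpen {s : ℂ | ∀ n : ℕ, 1 ≤ n → s ≠ (n : ℂ)} := by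
  have : {s : ℂ | ∀ n : ℕ, 1 ≤ n → s ≠ (n : ℂ)}
      = ((fun n : ℕ => (n : ℂ)) '' {n : ℕ | 1 ≤ n})ᶜ := by
    ext s
    simp only [Set.mem_setOf_eq, Set.mem_compl_iff, Set.mem_image, not_exists]
    constructor
    · rintro h n ⟨hn, rfl⟩; exact h n hn rfl
    · intro h n hn hs; exact h n ⟨hn, hs.symm⟩
  rw [this]
  exact isClosed_posNat.isOpen_compl

/-- geometry: uniform lower bounds on distances to positive integers -/
lemma geom_bounds {K : Set ℂ} (hK : IsCompact K)
    (hKU : ∀ s ∈ K, ∀ n : ℕ, 1 ≤ n → s ≠ (n : ℂ)) :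
    ∃ d M : ℝ, 0 < d ∧ 0 ≤ M ∧ ∀ s ∈ K, ‖s‖ ≤ M ∧
      ∀ j : ℕ, 1 ≤ j → max d ((j : ℝ) - M) ≤ ‖s - (j : ℂ)‖ := by
  rcases K.eq_empty_or_nonempty with rfl | hne
  · exact ⟨1, 0, one_pos, le_refl 0, by simp⟩
  -- bound on norms
  obtain ⟨M0, hM0⟩ := hK.isBounded.exists_norm_le
  set M := max M0 0 with hM
  have hMnn : 0 ≤ M := le_max_right _ _
  have hMb : ∀ s ∈ K, ‖s‖ ≤ M := fun s hs => le_trans (hM0 s hs) (le_max_left _ _)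
  -- positive distance to the set S
  set S := (fun n : ℕ => (n : ℂ)) '' {n : ℕ | 1 ≤ n} with hS
  have hScl : IsClosed S := isClosed_posNat
  have hScont : ContinuousOn (fun s : ℂ => infDist s S) K :=
    (continuous_infDist_pt S).continuousOn
  obtain ⟨s0, hs0K, hs0⟩ := hK.exists_isMinOn hne hScont
  have hs0pos : 0 < infDist s0 S := by
    rw [← hScl.notMem_iff_infDist_pos ⟨(1 : ℂ), ⟨1, by simp⟩⟩]
    rintro ⟨n, hn, hns⟩
    exact hKU s0 hs0K n hn hns.symm
  refine ⟨infDist s0 S, M, hs0pos, hMnn, fun s hs => ⟨hMb s hs, fun j hj => ?_⟩⟩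
  have hjS : (j : ℂ) ∈ S := ⟨j, hj, rfl⟩
  have h1 : infDist s0 S ≤ ‖s - (j : ℂ)‖ := by
    have := infDist_le_dist_of_mem (x := s) hjS
    calc infDist s0 S ≤ infDist s S := hs0 hs
      _ ≤ dist s (j : ℂ) := this
      _ = ‖s - (j : ℂ)‖ := by rw [dist_eq_norm]
  have h2 : (j : ℝ) - M ≤ ‖s - (j : ℂ)‖ := by
    have : ‖(j : ℂ)‖ - ‖s‖ ≤ ‖s - (j : ℂ)‖ := by
      rw [norm_sub_rev]; exact norm_sub_norm_le _ _
    have hjn : ‖(j : ℂ)‖ = (j : ℝ) := by simp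
    have := hMb s hs
    linarith [hjn ▸ ‹‖(j:ℂ)‖ - ‖s‖ ≤ _›]
  exact max_le h1 h2

/-- summability of 1 / (max d (j - M))^p for p ≥ 2 -/
lemma summable_mpow (d M : ℝ) (hd : 0 < d) (hM : 0 ≤ M) (p : ℕ) (hp : 2 ≤ p) :
    Summable (fun j : ℕ => 1 / (max d ((j : ℝ) - M)) ^ p) := by
  set N := ⌈M⌉₊ + 1 with hN
  rw [← summable_nat_add_iff N]
  have hbase : Summable (fun j : ℕ => 1 / ((j : ℝ) + 1) ^ p) := by
    have h := (Real.summable_one_div_nat_pow (p := p)).mpr (by omega)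
    have := (summable_nat_add_iff 1).mpr h
    simpa using this
  refine Summable.of_nonneg_of_le (fun j => by positivity) (fun j => ?_) hbase
  have hge : (j : ℝ) + 1 ≤ max d ((j + N : ℕ) - M) := by
    have h1 : M ≤ ⌈M⌉₊ := Nat.le_ceil M
    have h2 : ((j + N : ℕ) : ℝ) = (j : ℝ) + (⌈M⌉₊ : ℝ) + 1 := by push_cast [hN]; ring
    have : (j : ℝ) + 1 ≤ ((j + N : ℕ) : ℝ) - M := by rw [h2]; linarith
    exact le_trans this (le_max_right _ _)
  have hpos : (0:ℝ) < (j : ℝ) + 1 := by positivity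
  have hp2 : ((j:ℝ)+1)^p ≤ (max d (((j+N:ℕ):ℝ) - M))^p := pow_le_pow_left₀ hpos.le hge p
  exact one_div_le_one_div_of_le (by positivity) hp2

lemma key_uniform (z : ℂ) {K : Set ℂ} (hK : IsCompact K)
    (hKU : ∀ s ∈ K, ∀ n : ℕ, 1 ≤ n → s ≠ (n : ℂ)) :
    TendstoUniformlyOn (fun n s => Qn n s z)
      (fun s => z + ∑' k, (Qn (k + 1) s z - Qn k s z)) atTop K := by
  classical
  obtain ⟨d, M, hd, hM, hgeo⟩ := geom_bounds hK hKU
  set m : ℕ → ℝ := fun j => max d ((j : ℝ) - M) with hm_def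
  have hm_pos : ∀ j, 0 < m j := fun j => lt_of_lt_of_le hd (le_max_left _ _)
  have hm_d : ∀ j, d ≤ m j := fun j => le_max_left _ _
  have hm_lb : ∀ s ∈ K, ∀ j : ℕ, 1 ≤ j → m j ≤ ‖s - (j : ℂ)‖ :=
    fun s hs j hj => (hgeo s hs).2 j hj
  set r : ℝ := ‖z‖ + 1 with hr_def
  have hz_r : ‖z‖ ≤ r := by simp [hr_def]
  have hr0 : 0 ≤ r := le_trans (norm_nonneg z) hz_r
  set u : ℕ → ℝ := fun j => r ^ 2 / m j ^ 2 + r ^ 3 / m j ^ 3 with hu_def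
  set t : ℕ → ℝ := fun j => 2 * r / m j ^ 2 + 3 * r ^ 2 / m j ^ 3 with ht_def
  have hu_nonneg : ∀ j, 0 ≤ u j := fun j => by
    have := hm_pos j; positivity
  have ht_nonneg : ∀ j, 0 ≤ t j := fun j => by
    have := hm_pos j; positivity
  have hu_sum : Summable u := by
    have h2 := (summable_mpow d M hd hM 2 (by norm_num)).mul_left (r ^ 2)
    have h3 := (summable_mpow d M hd hM 3 (by norm_num)).mul_left (r ^ 3)
    exact (h2.add h3).congr (fun j => by simp [hu_def, hm_def, div_eq_mul_inv])
  have ht_sum : Summable t := by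
    have h2 := (summable_mpow d M hd hM 2 (by norm_num)).mul_left (2 * r)
    have h3 := (summable_mpow d M hd hM 3 (by norm_num)).mul_left (3 * r ^ 2)
    exact (h2.add h3).congr (fun j => by simp [ht_def, hm_def, div_eq_mul_inv])
  -- choose tail threshold N
  obtain ⟨N, hN⟩ : ∃ N, (∑' l, u (l + (N + 1))) ≤ 1 := by
    have h := tendsto_sum_nat_add u
    have h1 := (h.eventually (eventually_le_nhds (by norm_num : (0:ℝ) < 1)))
    obtain ⟨i0, hi0⟩ := eventually_atTop.mp h1
    exact ⟨i0, hi0 (i0 + 1) (by omega)⟩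
  -- partial sums of tail increments
  set sig : ℕ → ℝ := fun j => ∑ l ∈ Finset.range j, u (N + l + 1) with hsig_def
  have hsig_nonneg : ∀ j, 0 ≤ sig j := fun j =>
    Finset.sum_nonneg fun l _ => hu_nonneg _
  have hsig_succ : ∀ j, sig (j + 1) = sig j + u (N + j + 1) := fun j =>
    Finset.sum_range_succ _ j
  have hshift_sum : Summable (fun l => u (l + (N + 1))) :=
    (summable_nat_add_iff (N + 1)).mpr hu_sum
  have hsig_le : ∀ j, sig j ≤ 1 := by
    intro j
    have h1 : sig j = ∑ l ∈ Finset.range j, u (l + (N + 1)) := by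
      apply Finset.sum_congr rfl
      intro l _; congr 1; omega
    have h2 : ∑ l ∈ Finset.range j, u (l + (N + 1)) ≤ ∑' l, u (l + (N + 1)) :=
      Summable.sum_le_tsum _ (fun l _ => hu_nonneg _) hshift_sum
    linarith [h1 ▸ h2]
  -- head radius and Lipschitz sequences
  set B : ℕ → ℝ := fun k =>
    Nat.rec r (fun _ Bk => Bk + Bk ^ 2 / d ^ 2 + Bk ^ 3 / d ^ 3) k with hB_def
  have hB0 : B 0 = r := rfl
  have hBsucc : ∀ k, B (k + 1) = B k + B k ^ 2 / d ^ 2 + B k ^ 3 / d ^ 3 := fun k => rfl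
  have hB_nonneg : ∀ k, 0 ≤ B k := by
    intro k; induction k with
    | zero => exact hr0
    | succ k ih => rw [hBsucc]; positivity
  set L : ℕ → ℝ := fun k =>
    Nat.rec 1 (fun k Lk => Lk * (1 + 2 * B k / d ^ 2 + 3 * B k ^ 2 / d ^ 3)) k with hL_def
  have hL0 : L 0 = 1 := rfl
  have hLsucc : ∀ k, L (k + 1) = L k * (1 + 2 * B k / d ^ 2 + 3 * B k ^ 2 / d ^ 3) := fun k => rfl
  have hL_nonneg : ∀ k, 0 ≤ L k := by
    intro k; induction k with
    | zero => norm_num [hL0]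
    | succ k ih =>
        rw [hLsucc]
        have h1 : (0:ℝ) ≤ 1 + 2 * B k / d ^ 2 + 3 * B k ^ 2 / d ^ 3 := by
          have := hB_nonneg k; positivity
        positivity
  -- head claim
  have head : ∀ k, ∀ i : ℕ, ∀ s ∈ K, ∀ w w' : ℂ, ‖w‖ ≤ r → ‖w'‖ ≤ r →
      ‖Qn k (s - (i : ℕ)) w‖ ≤ B k ∧
        ‖Qn k (s - (i : ℕ)) w - Qn k (s - (i : ℕ)) w'‖ ≤ L k * ‖w - w'‖ := by
    intro k
    induction k with
    | zero =>
        intro i s hs w w' hw hw'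
        refine ⟨hw, ?_⟩
        rw [hL0, one_mul]
        exact le_refl _
    | succ k ih =>
        intro i s hs w w' hw hw'
        have harg : s - ((i : ℕ) : ℂ) - 1 = s - (((i + 1 : ℕ)) : ℂ) := by push_cast; ring
        have hQ : ∀ v : ℂ, Qn (k + 1) (s - (i : ℕ)) v =
            Qn k (s - ((i + 1 : ℕ) : ℂ)) v + (Qn k (s - ((i + 1 : ℕ) : ℂ)) v) ^ 2 / (s - ((i + 1 : ℕ) : ℂ)) ^ 2 +
              (Qn k (s - ((i + 1 : ℕ) : ℂ)) v) ^ 3 / (s - ((i + 1 : ℕ) : ℂ)) ^ 3 := by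
          intro v
          show Qn k (s - (i:ℕ) - 1) v + _ + _ = _
          rw [harg]
        have hden : d ≤ ‖s - ((i + 1 : ℕ) : ℂ)‖ := by
          refine le_trans (hm_d (i + 1)) (hm_lb s hs (i + 1) (by omega))
        obtain ⟨hv, _⟩ := ih (i + 1) s hs w w' hw hw'
        obtain ⟨_, hlip⟩ := ih (i + 1) s hs w w' hw hw'
        constructor
        · rw [hQ w, hBsucc]
          set v := Qn k (s - ((i + 1 : ℕ) : ℂ)) w
          calc ‖v + v ^ 2 / (s - ((i + 1:ℕ):ℂ)) ^ 2 + v ^ 3 / (s - ((i + 1:ℕ):ℂ)) ^ 3‖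
              ≤ ‖v‖ + ‖v ^ 2 / (s - ((i + 1:ℕ):ℂ)) ^ 2 + v ^ 3 / (s - ((i + 1:ℕ):ℂ)) ^ 3‖ := by
                rw [add_assoc]; exact norm_add_le _ _
            _ ≤ B k + (B k ^ 2 / d ^ 2 + B k ^ 3 / d ^ 3) :=
                add_le_add hv (step_inc hd hden hv)
            _ = B k + B k ^ 2 / d ^ 2 + B k ^ 3 / d ^ 3 := by ring
        · rw [hQ w, hQ w', hLsucc]
          set v := Qn k (s - ((i + 1 : ℕ) : ℂ)) w
          set v' := Qn k (s - ((i + 1 : ℕ) : ℂ)) w'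
          have hv' : ‖v'‖ ≤ B k := (ih (i + 1) s hs w' w hw' hw).1
          calc ‖_ - _‖ ≤ (1 + 2 * B k / d ^ 2 + 3 * B k ^ 2 / d ^ 3) * ‖v - v'‖ :=
                step_lip hd hden hv hv'
            _ ≤ (1 + 2 * B k / d ^ 2 + 3 * B k ^ 2 / d ^ 3) * (L k * ‖w - w'‖) := by
                have h1 : (0:ℝ) ≤ 1 + 2 * B k / d ^ 2 + 3 * B k ^ 2 / d ^ 3 := by
                  have := hB_nonneg k; positivity
                exact mul_le_mul_of_nonneg_left hlip h1
            _ = L k * (1 + 2 * B k / d ^ 2 + 3 * B k ^ 2 / d ^ 3) * ‖w - w'‖ := by ring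
  -- tail products
  set P : ℕ → ℝ := fun j => ∏ l ∈ Finset.range j, (1 + t (N + l + 1)) with hP_def
  have hP_nonneg : ∀ j, 0 ≤ P j := fun j =>
    Finset.prod_nonneg fun l _ => by have := ht_nonneg (N + l + 1); linarith
  have hP_succ : ∀ j, P (j + 1) = P j * (1 + t (N + j + 1)) := fun j =>
    Finset.prod_range_succ _ j
  set E : ℝ := Real.exp (∑' l, t l) with hE_def
  have hE_pos : 0 < E := Real.exp_pos _
  have hP_le : ∀ j, P j ≤ E := by
    intro j
    have h1 : P j ≤ ∏ l ∈ Finset.range j, Real.exp (t (N + l + 1)) := by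
      refine Finset.prod_le_prod (fun l _ => by have := ht_nonneg (N + l + 1); linarith)
        (fun l _ => ?_)
      have := Real.add_one_le_exp (t (N + l + 1))
      linarith
    have h2 : ∏ l ∈ Finset.range j, Real.exp (t (N + l + 1)) =
        Real.exp (∑ l ∈ Finset.range j, t (N + l + 1)) := (Real.exp_sum _ _).symm
    have h3 : ∑ l ∈ Finset.range j, t (N + l + 1) ≤ ∑' l, t l := by
      have ht_shift : Summable (fun l => t (l + (N + 1))) :=
        (summable_nat_add_iff (N + 1)).mpr ht_sum
      have e1 : ∑ l ∈ Finset.range j, t (N + l + 1) = ∑ l ∈ Finset.range j, t (l + (N + 1)) :=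
        Finset.sum_congr rfl (fun l _ => by congr 1; omega)
      have e2 : ∑ l ∈ Finset.range j, t (l + (N + 1)) ≤ ∑' l, t (l + (N + 1)) :=
        Summable.sum_le_tsum _ (fun l _ => ht_nonneg _) ht_shift
      have e3 := Summable.sum_add_tsum_nat_add (f := t) (N + 1) ht_sum
      have e4 : 0 ≤ ∑ i ∈ Finset.range (N + 1), t i :=
        Finset.sum_nonneg fun i _ => ht_nonneg i
      linarith
    calc P j ≤ Real.exp (∑ l ∈ Finset.range j, t (N + l + 1)) := h2 ▸ h1
      _ ≤ E := Real.exp_le_exp.mpr h3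
  -- tail claim
  have tail : ∀ j, ∀ s ∈ K, ∀ w w' : ℂ, ‖w - z‖ ≤ 1 - sig j → ‖w' - z‖ ≤ 1 - sig j →
      ‖Qn j (s - (N : ℕ)) w - w‖ ≤ sig j ∧
        ‖Qn j (s - (N : ℕ)) w - Qn j (s - (N : ℕ)) w'‖ ≤ P j * ‖w - w'‖ := by
    intro j
    induction j with
    | zero =>
        intro s hs w w' hw hw'
        constructor
        · simp [Qn, hsig_def]
        · simp [Qn, hP_def]
    | succ j ih =>
        intro s hs w w' hw hw'
        have harg : s - ((N : ℕ) : ℂ) - ((j + 1 : ℕ) : ℂ) = s - ((N + j + 1 : ℕ) : ℂ) := by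
          push_cast; ring
        have hden : m (N + j + 1) ≤ ‖s - ((N + j + 1 : ℕ) : ℂ)‖ :=
          hm_lb s hs (N + j + 1) (by omega)
        have hmp := hm_pos (N + j + 1)
        have hsj1 : sig (j + 1) ≤ 1 := hsig_le (j + 1)
        have hsucc := hsig_succ j
        have hunn := hu_nonneg (N + j + 1)
        -- the one-step images
        have hstep : ∀ v : ℂ, ‖v - z‖ ≤ 1 - sig (j + 1) →
            ‖(v + v ^ 2 / (s - ((N:ℕ):ℂ) - ((j+1:ℕ):ℂ)) ^ 2 +
                v ^ 3 / (s - ((N:ℕ):ℂ) - ((j+1:ℕ):ℂ)) ^ 3) - v‖ ≤ u (N + j + 1) := by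
          intro v hv
          have hvr : ‖v‖ ≤ r := by
            have h1 : ‖v‖ ≤ ‖z‖ + ‖v - z‖ := by
              calc ‖v‖ = ‖z + (v - z)‖ := by ring_nf
                _ ≤ ‖z‖ + ‖v - z‖ := norm_add_le _ _
            have h2 : 1 - sig (j + 1) ≤ 1 := by linarith [hsig_nonneg (j + 1)]
            simp only [hr_def]; linarith
          have hle := step_inc (a := s - ((N + j + 1 : ℕ) : ℂ)) hmp hden hvr
          have heq : (v + v ^ 2 / (s - ((N:ℕ):ℂ) - ((j+1:ℕ):ℂ)) ^ 2 +
              v ^ 3 / (s - ((N:ℕ):ℂ) - ((j+1:ℕ):ℂ)) ^ 3) - v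
              = v ^ 2 / (s - ((N + j + 1 : ℕ) : ℂ)) ^ 2 + v ^ 3 / (s - ((N + j + 1 : ℕ) : ℂ)) ^ 3 := by
            rw [harg]; ring
          rw [heq]; exact hle
        have hnr : ∀ v : ℂ, ‖v - z‖ ≤ 1 - sig (j + 1) → ‖v‖ ≤ r := by
          intro v hv
          have h1 : ‖v‖ ≤ ‖z‖ + ‖v - z‖ := by
            calc ‖v‖ = ‖z + (v - z)‖ := by ring_nf
              _ ≤ ‖z‖ + ‖v - z‖ := norm_add_le _ _
          have h2 : 1 - sig (j + 1) ≤ 1 := by linarith [hsig_nonneg (j + 1)]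
          simp only [hr_def]; linarith
        set Fw := w + w ^ 2 / (s - ((N:ℕ):ℂ) - ((j+1:ℕ):ℂ)) ^ 2 +
          w ^ 3 / (s - ((N:ℕ):ℂ) - ((j+1:ℕ):ℂ)) ^ 3 with hFw_def
        set Fw' := w' + w' ^ 2 / (s - ((N:ℕ):ℂ) - ((j+1:ℕ):ℂ)) ^ 2 +
          w' ^ 3 / (s - ((N:ℕ):ℂ) - ((j+1:ℕ):ℂ)) ^ 3 with hFw'_def
        have hrec : Qn (j + 1) (s - ((N:ℕ):ℂ)) w = Qn j (s - ((N:ℕ):ℂ)) Fw :=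
          Qn_succ_inner j _ w
        have hrec' : Qn (j + 1) (s - ((N:ℕ):ℂ)) w' = Qn j (s - ((N:ℕ):ℂ)) Fw' :=
          Qn_succ_inner j _ w'
        have hFw_inc : ‖Fw - w‖ ≤ u (N + j + 1) := hstep w hw
        have hFw'_inc : ‖Fw' - w'‖ ≤ u (N + j + 1) := hstep w' hw'
        have hFw_z : ‖Fw - z‖ ≤ 1 - sig j := by
          calc ‖Fw - z‖ = ‖(Fw - w) + (w - z)‖ := by ring_nf
            _ ≤ ‖Fw - w‖ + ‖w - z‖ := norm_add_le _ _
            _ ≤ u (N + j + 1) + (1 - sig (j + 1)) := add_le_add hFw_inc hw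
            _ = 1 - sig j := by rw [hsucc]; ring
        have hFw'_z : ‖Fw' - z‖ ≤ 1 - sig j := by
          calc ‖Fw' - z‖ = ‖(Fw' - w') + (w' - z)‖ := by ring_nf
            _ ≤ ‖Fw' - w'‖ + ‖w' - z‖ := norm_add_le _ _
            _ ≤ u (N + j + 1) + (1 - sig (j + 1)) := add_le_add hFw'_inc hw'
            _ = 1 - sig j := by rw [hsucc]; ring
        obtain ⟨ih1, ih2⟩ := ih s hs Fw Fw' hFw_z hFw'_z
        constructor
        · rw [hrec]
          calc ‖Qn j (s - ((N:ℕ):ℂ)) Fw - w‖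
              = ‖(Qn j (s - ((N:ℕ):ℂ)) Fw - Fw) + (Fw - w)‖ := by ring_nf
            _ ≤ ‖Qn j (s - ((N:ℕ):ℂ)) Fw - Fw‖ + ‖Fw - w‖ := norm_add_le _ _
            _ ≤ sig j + u (N + j + 1) := add_le_add ih1 hFw_inc
            _ = sig (j + 1) := (hsucc).symm
        · rw [hrec, hrec']
          have hden' : m (N + j + 1) ≤ ‖s - ((N:ℕ):ℂ) - ((j+1:ℕ):ℂ)‖ := by
            rw [harg]; exact hden
          have hwr : ‖w‖ ≤ r := hnr w hw
          have hwr' : ‖w'‖ ≤ r := hnr w' hw'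
          have hlipF : ‖Fw - Fw'‖ ≤ (1 + t (N + j + 1)) * ‖w - w'‖ := by
            have := step_lip hmp hden' hwr hwr'
            have ht_eq : 1 + 2 * r / m (N+j+1) ^ 2 + 3 * r ^ 2 / m (N+j+1) ^ 3
                = 1 + t (N + j + 1) := by simp [ht_def]; ring
            rw [hFw_def, hFw'_def, ← ht_eq]
            exact this
          calc ‖Qn j (s - ((N:ℕ):ℂ)) Fw - Qn j (s - ((N:ℕ):ℂ)) Fw'‖
              ≤ P j * ‖Fw - Fw'‖ := ih2
            _ ≤ P j * ((1 + t (N + j + 1)) * ‖w - w'‖) :=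
                mul_le_mul_of_nonneg_left hlipF (hP_nonneg j)
            _ = P (j + 1) * ‖w - w'‖ := by rw [hP_succ]; ring
  -- majorant series
  set Mser : ℕ → ℝ := fun k => if k < N then B (k + 1) + B k else L N * (E * u (k + 1))
    with hMser_def
  have hMser_sum : Summable Mser := by
    rw [← summable_nat_add_iff N]
    have hcore : Summable (fun k => (L N * E) * u (k + (N + 1))) :=
      ((summable_nat_add_iff (N + 1)).mpr hu_sum).mul_left (L N * E)
    refine hcore.congr (fun k => ?_)
    have h1 : ¬ (k + N < N) := by omega
    have h2 : k + (N + 1) = k + N + 1 := by omega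
    simp only [hMser_def, if_neg h1, h2, mul_assoc]
  -- the difference bound
  have hbound : ∀ k, ∀ s ∈ K, ‖Qn (k + 1) s z - Qn k s z‖ ≤ Mser k := by
    intro k s hs
    have hs0 : s - ((0 : ℕ) : ℂ) = s := by simp
    by_cases hk : k < N
    · have h1 := (head (k + 1) 0 s hs z z hz_r hz_r).1
      have h2 := (head k 0 s hs z z hz_r hz_r).1
      rw [hs0] at h1 h2
      rw [hMser_def]; simp only [if_pos hk]
      calc ‖Qn (k + 1) s z - Qn k s z‖ ≤ ‖Qn (k + 1) s z‖ + ‖Qn k s z‖ := norm_sub_le _ _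
        _ ≤ B (k + 1) + B k := add_le_add h1 h2
    · set j := k - N with hj_def
      have hkNj : k = N + j := by omega
      have hsplit1 : Qn (k + 1) s z = Qn N s (Qn (j + 1) (s - ((N:ℕ):ℂ)) z) := by
        have : k + 1 = N + (j + 1) := by omega
        rw [this, Qn_split]
      have hsplit2 : Qn k s z = Qn N s (Qn j (s - ((N:ℕ):ℂ)) z) := by
        rw [hkNj, Qn_split]
      set a := Qn j (s - ((N:ℕ):ℂ)) z with ha_def
      set b := Qn (j + 1) (s - ((N:ℕ):ℂ)) z with hb_def
      have hz_dom : ∀ i, ‖z - z‖ ≤ 1 - sig i := fun i => by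
        simp only [sub_self, norm_zero]; linarith [hsig_le i]
      have haz : ‖a - z‖ ≤ sig j := (tail j s hs z z (hz_dom j) (hz_dom j)).1
      have hbz : ‖b - z‖ ≤ sig (j + 1) := (tail (j + 1) s hs z z (hz_dom (j+1)) (hz_dom (j+1))).1
      have har : ‖a‖ ≤ r := by
        have h1 : ‖a‖ ≤ ‖z‖ + ‖a - z‖ := by
          calc ‖a‖ = ‖z + (a - z)‖ := by ring_nf
            _ ≤ ‖z‖ + ‖a - z‖ := norm_add_le _ _
        have := hsig_le j
        simp only [hr_def]; linarith
      have hbr : ‖b‖ ≤ r := by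
        have h1 : ‖b‖ ≤ ‖z‖ + ‖b - z‖ := by
          calc ‖b‖ = ‖z + (b - z)‖ := by ring_nf
            _ ≤ ‖z‖ + ‖b - z‖ := norm_add_le _ _
        have := hsig_le (j + 1)
        simp only [hr_def]; linarith
      -- distance between b and a
      have hba : ‖b - a‖ ≤ E * u (N + j + 1) := by
        have harg : s - ((N : ℕ) : ℂ) - ((j + 1 : ℕ) : ℂ) = s - ((N + j + 1 : ℕ) : ℂ) := by
          push_cast; ring
        have hden : m (N + j + 1) ≤ ‖s - ((N + j + 1 : ℕ) : ℂ)‖ :=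
          hm_lb s hs (N + j + 1) (by omega)
        have hmp := hm_pos (N + j + 1)
        set w1 := z + z ^ 2 / (s - ((N:ℕ):ℂ) - ((j+1:ℕ):ℂ)) ^ 2 +
          z ^ 3 / (s - ((N:ℕ):ℂ) - ((j+1:ℕ):ℂ)) ^ 3 with hw1_def
        have hb_eq : b = Qn j (s - ((N:ℕ):ℂ)) w1 := Qn_succ_inner j _ z
        have hw1z : ‖w1 - z‖ ≤ u (N + j + 1) := by
          have hle := step_inc (a := s - ((N + j + 1 : ℕ) : ℂ)) hmp hden hz_r
          have heq : w1 - z = z ^ 2 / (s - ((N + j + 1 : ℕ) : ℂ)) ^ 2 +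
              z ^ 3 / (s - ((N + j + 1 : ℕ) : ℂ)) ^ 3 := by
            rw [hw1_def, harg]; ring
          rw [heq]; exact hle
        have hw1dom : ‖w1 - z‖ ≤ 1 - sig j := by
          have := hsig_le (j + 1)
          have := hsig_succ j
          linarith
        have htl := (tail j s hs w1 z hw1dom (hz_dom j)).2
        calc ‖b - a‖ = ‖Qn j (s - ((N:ℕ):ℂ)) w1 - Qn j (s - ((N:ℕ):ℂ)) z‖ := by
              rw [hb_eq, ha_def]
          _ ≤ P j * ‖w1 - z‖ := htl
          _ ≤ E * u (N + j + 1) := by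
              have h1 : P j * ‖w1 - z‖ ≤ E * ‖w1 - z‖ :=
                mul_le_mul_of_nonneg_right (hP_le j) (norm_nonneg _)
              have h2 : E * ‖w1 - z‖ ≤ E * u (N + j + 1) :=
                mul_le_mul_of_nonneg_left hw1z hE_pos.le
              linarith
      have hhead := (head N 0 s hs b a hbr har).2
      rw [hs0] at hhead
      have hfin : ‖Qn (k + 1) s z - Qn k s z‖ ≤ L N * (E * u (N + j + 1)) := by
        rw [hsplit1, hsplit2]
        calc ‖Qn N s b - Qn N s a‖ ≤ L N * ‖b - a‖ := hhead
          _ ≤ L N * (E * u (N + j + 1)) :=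
            mul_le_mul_of_nonneg_left hba (hL_nonneg N)
      rw [hMser_def]; simp only [if_neg hk]
      have : N + j + 1 = k + 1 := by omega
      rw [this] at hfin
      exact hfin
  -- telescoping identity
  have hQeq : ∀ (n : ℕ) (s : ℂ), Qn n s z
      = z + ∑ k ∈ Finset.range n, (Qn (k + 1) s z - Qn k s z) := by
    intro n s
    rw [Finset.sum_range_sub (f := fun k => Qn k s z)]
    simp [Qn]
  -- conclusion
  have hTU := tendstoUniformlyOn_tsum_nat hMser_sum
    (f := fun k s => Qn (k + 1) s z - Qn k s z) (fun k s hs => hbound k s hs)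
  have hconst : TendstoUniformlyOn (fun (_ : ℕ) (_ : ℂ) => z) (fun _ => z) atTop K :=
    Filter.Tendsto.tendstoUniformlyOn_const tendsto_const_nhds K
  have hsum := hconst.add hTU
  refine hsum.congr ?_
  filter_upwards with n s hs
  exact (hQeq n s).symm

lemma Qn_differentiableOn (z : ℂ) (n : ℕ) :
    DifferentiableOn ℂ (fun s => Qn n s z) {s : ℂ | ∀ k : ℕ, 1 ≤ k → s ≠ (k : ℂ)} := by
  set U := {s : ℂ | ∀ k : ℕ, 1 ≤ k → s ≠ (k : ℂ)} with hU_def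
  induction n with
  | zero =>
      show DifferentiableOn ℂ (fun _ => z) U
      exact differentiableOn_const z
  | succ n ih =>
      have hmap : Set.MapsTo (fun s : ℂ => s - 1) U U := by
        intro s hs k hk heq
        refine hs (k + 1) (by omega) ?_
        push_cast
        linear_combination heq
      have hsub : DifferentiableOn ℂ (fun s : ℂ => s - 1) U :=
        (differentiable_id.sub_const 1).differentiableOn
      have hg : DifferentiableOn ℂ (fun s => Qn n (s - 1) z) U := ih.comp hsub hmap
      have hne : ∀ s ∈ U, s - 1 ≠ 0 := by
        intro s hs h
        exact hs 1 le_rfl (by push_cast; linear_combination h)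
      show DifferentiableOn ℂ (fun s => Qn n (s - 1) z + (Qn n (s - 1) z) ^ 2 / (s - 1) ^ 2 +
        (Qn n (s - 1) z) ^ 3 / (s - 1) ^ 3) U
      refine DifferentiableOn.add (DifferentiableOn.add hg ?_) ?_
      · exact (hg.pow 2).div ((hsub).pow 2) (fun s hs => pow_ne_zero 2 (hne s hs))
      · exact (hg.pow 3).div ((hsub).pow 3) (fun s hs => pow_ne_zero 3 (hne s hs))

theorem stmt_19 :
    -- normal convergence of `∑_{j ≥ 1} (z^2/(s-j)^2 + z^3/(s-j)^3)` on compact sets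
    -- avoiding `ℕ = {1, 2, 3, ...}` in `s` and on compact disks in `z`:
    (∀ K : Set ℂ, IsCompact K → (∀ s ∈ K, ∀ n : ℕ, 1 ≤ n → s ≠ (n : ℂ)) →
      ∀ r : ℝ, ∃ c : ℕ → ℝ, Summable c ∧
        ∀ j : ℕ, 1 ≤ j → ∀ s ∈ K, ∀ w ∈ closedBall (0 : ℂ) r,
          ‖w ^ 2 / (s - (j : ℂ)) ^ 2 + w ^ 3 / (s - (j : ℂ)) ^ 3‖ ≤ c j) ∧
    -- consequently the infinite inner composition defines, for each parameter `z`,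
    -- a function `Q` holomorphic in `s` off `ℕ` satisfying the functional equation:
    (∀ z : ℂ, ∃ Q : ℂ → ℂ,
      (∀ s : ℂ, (∀ n : ℕ, 1 ≤ n → s ≠ (n : ℂ)) →
        Tendsto (fun n => Qn n s z) atTop (nhds (Q s))) ∧
      DifferentiableOn ℂ Q {s : ℂ | ∀ n : ℕ, 1 ≤ n → s ≠ (n : ℂ)} ∧
      (∀ s : ℂ, (∀ n : ℕ, s ≠ (n : ℂ)) →
        Q (s + 1) = Q s + (Q s) ^ 2 / s ^ 2 + (Q s) ^ 3 / s ^ 3)) := by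
  constructor
  · -- part 1
    intro K hK hKU r
    obtain ⟨d, M, hd, hM, hgeo⟩ := geom_bounds hK hKU
    set m : ℕ → ℝ := fun j => max d ((j : ℝ) - M) with hm_def
    set R : ℝ := max r 0 with hR_def
    have hR0 : 0 ≤ R := le_max_right _ _
    refine ⟨fun j => R ^ 2 / m j ^ 2 + R ^ 3 / m j ^ 3, ?_, ?_⟩
    · have h2 := (summable_mpow d M hd hM 2 (by norm_num)).mul_left (R ^ 2)
      have h3 := (summable_mpow d M hd hM 3 (by norm_num)).mul_left (R ^ 3)
      exact (h2.add h3).congr (fun j => by simp [hm_def, div_eq_mul_inv])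
    · intro j hj s hs w hw
      have hmp : 0 < m j := lt_of_lt_of_le hd (le_max_left _ _)
      have hden : m j ≤ ‖s - (j : ℂ)‖ := (hgeo s hs).2 j hj
      have hwR : ‖w‖ ≤ R := by
        have := mem_closedBall_iff_norm.mp hw
        simp only [sub_zero] at this
        exact le_trans this (le_max_left _ _)
      exact step_inc hmp hden hwR
  · -- part 2
    intro z
    set U := {s : ℂ | ∀ k : ℕ, 1 ≤ k → s ≠ (k : ℂ)} with hU_def
    set Q : ℂ → ℂ := fun s => z + ∑' k, (Qn (k + 1) s z - Qn k s z) with hQ_def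
    have hptw : ∀ s : ℂ, (∀ n : ℕ, 1 ≤ n → s ≠ (n : ℂ)) →
        Tendsto (fun n => Qn n s z) atTop (nhds (Q s)) := by
      intro s hs
      have hsing : IsCompact ({s} : Set ℂ) := isCompact_singleton
      have hcond : ∀ x ∈ ({s} : Set ℂ), ∀ n : ℕ, 1 ≤ n → x ≠ (n : ℂ) := by
        rintro x rfl; exact hs
      exact (key_uniform z hsing hcond).tendsto_at rfl
    refine ⟨Q, hptw, ?_, ?_⟩
    · -- differentiability
      have hUopen : IsOpen U := isOpen_U
      have hloc : TendstoLocallyUniformlyOn (fun n s => Qn n s z) Q atTop U := by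
        rw [tendstoLocallyUniformlyOn_iff_forall_isCompact hUopen]
        intro K hKsub hKc
        exact key_uniform z hKc (fun s hs => hKsub hs)
      exact hloc.differentiableOn
        (Eventually.of_forall fun n => Qn_differentiableOn z n) hUopen
    · -- functional equation
      intro s hs
      have hsU : ∀ n : ℕ, 1 ≤ n → s ≠ (n : ℂ) := fun n _ => hs n
      have hs1U : ∀ n : ℕ, 1 ≤ n → s + 1 ≠ (n : ℂ) := by
        intro n hn heq
        have hn' : n = (n - 1) + 1 := by omega
        rw [hn'] at heq
        push_cast at heq
        exact hs (n - 1) (by linear_combination heq)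
      have hs0 : s ≠ 0 := by
        have := hs 0; simpa using this
      have h1 := hptw (s + 1) hs1U
      have h2 := hptw s hsU
      have h3 : Tendsto (fun n => Qn (n + 1) (s + 1) z) atTop (nhds (Q (s + 1))) :=
        h1.comp (tendsto_add_atTop_nat 1)
      have h4 : (fun n => Qn (n + 1) (s + 1) z)
          = fun n => Qn n s z + (Qn n s z) ^ 2 / s ^ 2 + (Qn n s z) ^ 3 / s ^ 3 := by
        funext n
        show Qn n (s + 1 - 1) z + (Qn n (s + 1 - 1) z) ^ 2 / (s + 1 - 1) ^ 2 +
            (Qn n (s + 1 - 1) z) ^ 3 / (s + 1 - 1) ^ 3 = _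
        rw [add_sub_cancel_right]
      have h5 : Tendsto (fun n => Qn n s z + (Qn n s z) ^ 2 / s ^ 2 + (Qn n s z) ^ 3 / s ^ 3)
          atTop (nhds (Q s + (Q s) ^ 2 / s ^ 2 + (Q s) ^ 3 / s ^ 3)) :=
        (h2.add ((h2.pow 2).div_const _)).add ((h2.pow 3).div_const _)
      rw [h4] at h3
      exact tendsto_nhds_unique h3 h5
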